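/- Let $\hat\tau$ be a pattern with first entry $\hat\tau_1 = 1$, and let $\tau = 1 \oslash \hat\tau$ be the pattern $1(\hat\tau_1+1)(\hat\tau_2+1)\cdots(\hat\tau_m+1)$. A permutation $\sigma$ avoids $\tau$ if and only if the pattern of the subsequence of $\sigma$ obtained by deleting the left-to-right minima of $\sigma$ avoids $\hat\tau$. -/

import Mathlib

/-- Position `i` is a left-to-right minimum of the permutation `σ`. -/
def IsLRMin {N : ℕ} (σ : Equiv.Perm (Fin N)) (i : Fin N) : Prop :=
  ∀ t : Fin N, t < i → σ i < σ t

/-- `σ` contains the pattern `π`. -/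
def ContainsPattern {N k : ℕ} (σ : Equiv.Perm (Fin N)) (π : Equiv.Perm (Fin k)) : Prop :=
  ∃ f : Fin k → Fin N, StrictMono f ∧ ∀ i j : Fin k, π i < π j ↔ σ (f i) < σ (f j)

/-!
Split an occurrence of `1 ⊘ τ̂` into its first entry `t` and the remaining occurrence `f` of
`τ̂`. The first entry lies before and below every entry of `f`, so no entry of `f` is a
left-to-right minimum. Conversely, since `τ̂₁ = 1`, the first entry of `f` is both its leftmost
and its lowest; if it is not a left-to-right minimum, the earlier, smaller entry that witnesses
this can be put in front of `f` to give an occurrence of `1 ⊘ τ̂`.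
-/

open Equiv

def HasOrderOf {α : Type*} [LT α] {k : ℕ} (π : Perm (Fin k)) (v : Fin k → α) : Prop :=
  ∀ i j, π i < π j ↔ v i < v j

theorem hasOrderOf_oslash_iff {α : Type*} [LinearOrder α] {k : ℕ} {π : Perm (Fin k)}
    {π' : Perm (Fin (k + 1))} (h0 : π' 0 = 0) (hsucc : ∀ i, π' i.succ = (π i).succ)
    (v : Fin (k + 1) → α) :
    HasOrderOf π' v ↔ (∀ i : Fin k, v 0 < v i.succ) ∧ HasOrderOf π (Fin.tail v) := by
  simp only [HasOrderOf, Fin.forall_fin_succ, h0, hsucc, Fin.succ_pos, Fin.not_lt_zero,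
    Fin.succ_lt_succ_iff, Fin.tail, true_iff, false_iff, not_lt, le_refl, true_and, forall_and]
  exact ⟨fun h => ⟨h.2.1, h.2.2⟩, fun h => ⟨fun i => (h.1 i).le, h.1, h.2⟩⟩

theorem HasOrderOf.apply_zero_le {α : Type*} [LinearOrder α] {k : ℕ} {π : Perm (Fin (k + 1))}
    {v : Fin (k + 1) → α} (h : HasOrderOf π v) (h0 : π 0 = 0) (i : Fin (k + 1)) : v 0 ≤ v i :=
  not_lt.mp ((h i 0).not.mp (by rw [h0]; exact Fin.not_lt_zero _))

section LRMin

variable {N : ℕ} {σ : Perm (Fin N)}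

theorem not_isLRMin_iff {i : Fin N} : ¬IsLRMin σ i ↔ ∃ t < i, σ t < σ i := by
  simp only [IsLRMin, not_forall, not_lt, exists_prop]
  exact exists_congr fun t => and_congr_right fun ht => (σ.injective.ne ht.ne).le_iff_lt

theorem forall_not_isLRMin_iff {k : ℕ} {f : Fin (k + 1) → Fin N} (hf : Monotone f)
    (hmin : ∀ i, σ (f 0) ≤ σ (f i)) :
    (∀ i, ¬IsLRMin σ (f i)) ↔ ∃ t, (∀ i, t < f i) ∧ ∀ i, σ t < σ (f i) := by
  constructor
  · intro h
    obtain ⟨t, ht, hσt⟩ := not_isLRMin_iff.mp (h 0)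
    exact ⟨t, fun i => ht.trans_le (hf (Fin.zero_le i)),
      fun i => hσt.trans_le (hmin i)⟩
  · rintro ⟨t, ht, hσt⟩ i
    exact not_isLRMin_iff.mpr ⟨t, ht i, hσt i⟩

end LRMin

theorem avoids_oslash_iff {N m : ℕ} (τhat : Equiv.Perm (Fin (m + 1)))
    (hτhat1 : τhat 0 = 0)
    (τ : Equiv.Perm (Fin (m + 2)))
    (hτ0 : τ 0 = 0) (hτsucc : ∀ i : Fin (m + 1), τ i.succ = (τhat i).succ)
    (σ : Equiv.Perm (Fin N)) :
    ¬ContainsPattern σ τ ↔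
      ¬∃ f : Fin (m + 1) → Fin N, StrictMono f ∧ (∀ i, ¬IsLRMin σ (f i)) ∧
        ∀ i j : Fin (m + 1), τhat i < τhat j ↔ σ (f i) < σ (f j) := by
  refine not_congr ?_
  change (∃ g, StrictMono g ∧ HasOrderOf τ (σ ∘ g)) ↔
    ∃ f, StrictMono f ∧ (∀ i, ¬IsLRMin σ (f i)) ∧ HasOrderOf τhat (σ ∘ f)
  rw [Fin.exists_fin_succ_pi]
  simp only [Fin.strictMono_cons, hasOrderOf_oslash_iff hτ0 hτsucc, Fin.comp_cons,
    Fin.cons_zero, Fin.tail_cons, Fin.cons_succ, Function.comp_apply]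
  constructor
  · rintro ⟨t, f, ⟨ht, hf⟩, hσt, hord⟩
    refine ⟨f, hf, ?_, hord⟩
    exact (forall_not_isLRMin_iff hf.monotone (hord.apply_zero_le hτhat1)).mpr ⟨t, ht, hσt⟩
  · rintro ⟨f, hf, hnot, hord⟩
    obtain ⟨t, ht, hσt⟩ := (forall_not_isLRMin_iff hf.monotone (hord.apply_zero_le hτhat1)).mp hnot
    exact ⟨t, f, ⟨ht, hf⟩, hσt, hord⟩
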